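/- If N is a normal subgroup of a finite group G such that both N and G/N are mixable, then G is mixable, with mixlen(G) ≤ mixlen(N) + mixlen(G/N). -/

import Mathlib

open scoped Classical

/-- The distribution of the random subproduct `g 0 ^ ε 0 * ⋯ * g (k-1) ^ ε (k-1)`,
where `ε i` are independent Bernoulli variables with parameters `p i`. -/
noncomputable def subprodDist {G : Type*} [Group G] {k : ℕ} (g : Fin k → G)
    (p : Fin k → ℝ) (a : G) : ℝ :=
  ∑ ε : Fin k → Bool,
    (∏ i : Fin k, if ε i then p i else 1 - p i) *
      (if (List.ofFn fun i => if ε i then g i else 1).prod = a then 1 else 0)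

/-- `(g, p)` is a mixing sequence: valid probabilities whose random subproduct
is uniform on `G`. -/
def IsMixingSeq {G : Type*} [Group G] {k : ℕ} (g : Fin k → G) (p : Fin k → ℝ) : Prop :=
  (∀ i, 0 ≤ p i ∧ p i ≤ 1) ∧ ∀ a : G, subprodDist g p a = 1 / (Nat.card G : ℝ)

/-- A group is mixable if it admits a mixing sequence. -/
def Mixable (G : Type*) [Group G] : Prop :=
  ∃ (k : ℕ) (g : Fin k → G) (p : Fin k → ℝ), IsMixingSeq g p

/-- The mixing length of a group: minimal length of a mixing sequence. -/
noncomputable def mixlen (G : Type*) [Group G] : ℕ :=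
  sInf {k | ∃ (g : Fin k → G) (p : Fin k → ℝ), IsMixingSeq g p}

/-!
Concatenate a mixing sequence of `N` with lifts to `G` of a mixing sequence of `G ⧸ N`. The
random subproduct is `x * y` with `x` uniform on `N` and `y` independent of `x`, landing in each
coset `aN` with probability `1 / |G ⧸ N|`; given `y ∈ aN`, the product `x * y` hits `a` exactly
when `x = a * y⁻¹ ∈ N`, which has probability `1 / |N|`. So `x * y` is uniform on `G`, and the
concatenated sequence has length `mixlen N + mixlen (G ⧸ N)`.
-/

open Finset

section Subproduct

variable {G H : Type*} [Group G] [Group H] {k m n : ℕ}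

def subprod (g : Fin k → G) (ε : Fin k → Bool) : G :=
  (List.ofFn fun i => if ε i then g i else 1).prod

noncomputable def bernoulliWeight (p : Fin k → ℝ) (ε : Fin k → Bool) : ℝ :=
  ∏ i, if ε i then p i else 1 - p i

theorem subprodDist_eq_sum (g : Fin k → G) (p : Fin k → ℝ) (a : G) :
    subprodDist g p a = ∑ ε, bernoulliWeight p ε * if subprod g ε = a then 1 else 0 :=
  rfl

theorem map_subprod (φ : G →* H) (g : Fin k → G) (ε : Fin k → Bool) :
    φ (subprod g ε) = subprod (φ ∘ g) ε := by
  rw [subprod, subprod, ← List.prod_hom _ φ, List.map_ofFn]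
  congr 2
  funext i
  by_cases hi : ε i <;> simp [hi]

theorem subprod_append (g : Fin m → G) (h : Fin n → G) (ε : Fin m → Bool) (δ : Fin n → Bool) :
    subprod (Fin.append g h) (Fin.append ε δ) = subprod g ε * subprod h δ := by
  rw [subprod, subprod, subprod, ← List.prod_append, ← List.ofFn_fin_append]
  congr 2
  funext i
  induction i using Fin.addCases <;> simp

theorem bernoulliWeight_append (p : Fin m → ℝ) (q : Fin n → ℝ) (ε : Fin m → Bool)
    (δ : Fin n → Bool) :
    bernoulliWeight (Fin.append p q) (Fin.append ε δ) =
      bernoulliWeight p ε * bernoulliWeight q δ := by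
  simp [bernoulliWeight, Fin.prod_univ_add]

theorem sum_mul_subprodDist [Fintype G] (g : Fin k → G) (p : Fin k → ℝ) (f : G → ℝ) :
    ∑ a, f a * subprodDist g p a = ∑ ε, bernoulliWeight p ε * f (subprod g ε) := by
  simp_rw [subprodDist_eq_sum, mul_sum]
  rw [sum_comm]
  refine sum_congr rfl fun ε _ => ?_
  simp [mul_comm]

theorem subprodDist_append [Fintype G] (g : Fin m → G) (h : Fin n → G) (p : Fin m → ℝ)
    (q : Fin n → ℝ) (a : G) :
    subprodDist (Fin.append g h) (Fin.append p q) a =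
      ∑ b, subprodDist g p (a * b⁻¹) * subprodDist h q b := by
  have expand : subprodDist (Fin.append g h) (Fin.append p q) a =
      ∑ ε, ∑ δ, bernoulliWeight p ε * bernoulliWeight q δ *
        if subprod g ε * subprod h δ = a then 1 else 0 := by
    rw [subprodDist_eq_sum, ← (Fin.appendEquiv m n).sum_comp, Fintype.sum_prod_type]
    simp only [Fin.appendEquiv, Equiv.coe_fn_mk, subprod_append, bernoulliWeight_append]
  rw [expand, sum_comm, sum_mul_subprodDist]
  refine sum_congr rfl fun δ _ => ?_
  simp only [subprodDist_eq_sum, eq_mul_inv_iff_mul_eq, mul_sum]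
  exact sum_congr rfl fun ε _ => by ring

theorem subprodDist_comp_monoidHom [Fintype G] [DecidableEq H] (φ : G →* H) (g : Fin k → G)
    (p : Fin k → ℝ) (c : H) : subprodDist (φ ∘ g) p c = ∑ b with φ b = c, subprodDist g p b := by
  have fiber := sum_mul_subprodDist g p fun b => if φ b = c then 1 else 0
  simp only [boole_mul] at fiber
  rw [sum_filter, fiber, subprodDist_eq_sum]
  simp only [map_subprod]
  congr!

end Subproduct

section Mixing

variable {G : Type*} [Group G] {k m n : ℕ}

theorem IsMixingSeq.subprodDist_subtype [Fintype G] {N : Subgroup G} {g : Fin k → N}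
    {p : Fin k → ℝ} (hg : IsMixingSeq g p) (b : G) :
    subprodDist (N.subtype ∘ g) p b = if b ∈ N then (1 / Nat.card N : ℝ) else 0 := by
  rw [subprodDist_comp_monoidHom]
  split_ifs with hb
  · rw [sum_eq_single_of_mem (⟨b, hb⟩ : N) (by rw [mem_filter]; simp), hg.2]
    intro x hx hne
    exact absurd (Subtype.ext (mem_filter.mp hx).2) hne
  · refine sum_eq_zero fun x hx => absurd ?_ hb
    rw [← (mem_filter.mp hx).2]
    exact x.2

theorem IsMixingSeq.append_of_quotient [Fintype G] {N : Subgroup G} [N.Normal]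
    {gN : Fin m → N} {pN : Fin m → ℝ} {h : Fin n → G} {pQ : Fin n → ℝ}
    (hN : IsMixingSeq gN pN) (hQ : IsMixingSeq (QuotientGroup.mk' N ∘ h) pQ) :
    IsMixingSeq (Fin.append (N.subtype ∘ gN) h) (Fin.append pN pQ) := by
  refine ⟨fun i => ?_, fun a => ?_⟩
  · induction i using Fin.addCases <;> simp [hN.1, hQ.1]
  have hcard : (Nat.card G : ℝ) = Nat.card N * Nat.card (G ⧸ N) := by
    rw [Subgroup.card_eq_card_quotient_mul_card_subgroup N, Nat.cast_mul, mul_comm]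
  have hN0 : (Nat.card N : ℝ) ≠ 0 := by exact_mod_cast Nat.card_pos.ne'
  have hQ0 : (Nat.card (G ⧸ N) : ℝ) ≠ 0 := by exact_mod_cast Nat.card_pos.ne'
  calc subprodDist (Fin.append (N.subtype ∘ gN) h) (Fin.append pN pQ) a
      = ∑ b, (if QuotientGroup.mk' N b = a then (1 / Nat.card N : ℝ) else 0) *
          subprodDist h pQ b := by
        rw [subprodDist_append]
        refine sum_congr rfl fun b _ => ?_
        rw [hN.subprodDist_subtype, ← div_eq_mul_inv, ← QuotientGroup.eq_iff_div_mem,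
          QuotientGroup.mk'_apply, eq_comm (a := (a : G ⧸ N))]
        congr
    _ = 1 / Nat.card N * subprodDist (QuotientGroup.mk' N ∘ h) pQ a := by
        rw [subprodDist_comp_monoidHom, mul_sum, sum_filter]
        simp only [ite_zero_mul]
    _ = 1 / Nat.card G := by
        rw [hQ.2, hcard]
        field_simp

end Mixing

theorem mixlen_le {G : Type*} [Group G] {k : ℕ} {g : Fin k → G} {p : Fin k → ℝ}
    (hg : IsMixingSeq g p) : mixlen G ≤ k :=
  Nat.sInf_le ⟨g, p, hg⟩

theorem Mixable.exists_isMixingSeq_mixlen {G : Type*} [Group G] (hG : Mixable G) :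
    ∃ (g : Fin (mixlen G) → G) (p : Fin (mixlen G) → ℝ), IsMixingSeq g p :=
  Nat.sInf_mem hG

/-- If `N ⊴ G` and both `N` and `G/N` are mixable, then `G` is mixable, with
`mixlen G ≤ mixlen N + mixlen (G/N)`. -/
theorem mixable_of_normal_and_quotient (G : Type*) [Group G] [Finite G]
    (N : Subgroup G) [N.Normal] (hN : Mixable N) (hQ : Mixable (G ⧸ N)) :
    Mixable G ∧ mixlen G ≤ mixlen N + mixlen (G ⧸ N) := by
  have := Fintype.ofFinite G
  obtain ⟨gN, pN, hgN⟩ := hN.exists_isMixingSeq_mixlen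
  obtain ⟨gQ, pQ, hgQ⟩ := hQ.exists_isMixingSeq_mixlen
  have hlift : QuotientGroup.mk' N ∘ (fun i => (gQ i).out) = gQ := by
    funext i
    exact QuotientGroup.out_eq' (gQ i)
  have hmix := hgN.append_of_quotient (hlift ▸ hgQ)
  exact ⟨⟨_, _, _, hmix⟩, mixlen_le hmix⟩
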